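/- arXiv:2206.07551 — 5 statements merged into one kernel-verified Lean document; each statement's English description precedes it below -/
import Mathlib

section
/- Let μ be a σ-finite measure on a measurable space Z, let p_s, p_tk, p_tu : Z → [0,∞) be probability densities with respect to μ (measurable, nonnegative, integrating to 1), and let λ_tk, λ_tu > 0 with λ_tk + λ_tu = 1. Define p_avg := (p_s + λ_tk·p_tk + λ_tu·p_tu)/2 and assume p_s, p_tk, p_tu are μ-a.e. strictly positive. Define D* := (p_s/(2·p_avg), λ_tk·p_tk/(2·p_avg), λ_tu·p_tu/(2·p_avg)). Then for every measurable map D = (D_s, D_tk, D_tu) : Z → ℝ³ with D_s, D_tk, D_tu > 0 and D_s + D_tk + D_tu = 1 pointwise, and assuming all the integrals below are finite, one has −∫ p_s·log D_s dμ − λ_tk·∫ p_tk·log D_tk dμ − λ_tu·∫ p_tu·log D_tu dμ ≥ −∫ p_s·log D*_s dμ − λ_tk·∫ p_tk·log D*_tk dμ − λ_tu·∫ p_tu·log D*_tu dμ. -/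
open MeasureTheory


lemma key_log {p q d : ℝ} (hp : 0 < p) (hq : 0 < q) (hd : 0 < d) :
    p - q * d ≤ p * (Real.log (p / q) - Real.log d) := by
  have hx : 0 < p / (q * d) := div_pos hp (mul_pos hq hd)
  have h1 : Real.log (p / (q * d))⁻¹ ≤ (p / (q * d))⁻¹ - 1 :=
    Real.log_le_sub_one_of_pos (inv_pos.mpr hx)
  rw [Real.log_inv] at h1
  have h2 : 1 - (q * d) / p ≤ Real.log (p / (q * d)) := by
    rw [inv_div] at h1; linarith
  have h3 : Real.log (p / (q * d)) = Real.log (p / q) - Real.log d := by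
    rw [div_mul_eq_div_div, Real.log_div (by positivity) hd.ne']
  rw [h3] at h2
  have := mul_le_mul_of_nonneg_left h2 hp.le
  have hne : p ≠ 0 := hp.ne'
  calc p - q * d = p * (1 - q * d / p) := by
        rw [mul_sub, mul_one, mul_div_cancel₀ _ hne]
    _ ≤ p * (Real.log (p / q) - Real.log d) := this

/-- The discriminator `D* = (p_s, λ_tk·p_tk, λ_tu·p_tu)/(2·p_avg)` globally
minimizes the three-way discriminator loss among all positive discriminators summing to 1,
assuming all the involved integrals are finite. -/
theorem stmt_2 {Z : Type*} [MeasurableSpace Z] (μ : Measure Z) [SigmaFinite μ]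
    (ps ptk ptu : Z → ℝ) (ltk ltu : ℝ)
    (hps : Measurable ps) (hps0 : ∀ z, 0 ≤ ps z) (hps1 : ∫ z, ps z ∂μ = 1)
    (hptk : Measurable ptk) (hptk0 : ∀ z, 0 ≤ ptk z) (hptk1 : ∫ z, ptk z ∂μ = 1)
    (hptu : Measurable ptu) (hptu0 : ∀ z, 0 ≤ ptu z) (hptu1 : ∫ z, ptu z ∂μ = 1)
    (hltk : 0 < ltk) (hltu : 0 < ltu) (hsum : ltk + ltu = 1)
    (pavg : Z → ℝ) (hpavg : ∀ z, pavg z = (ps z + ltk * ptk z + ltu * ptu z) / 2)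
    (hpos_s : ∀ᵐ z ∂μ, 0 < ps z) (hpos_tk : ∀ᵐ z ∂μ, 0 < ptk z)
    (hpos_tu : ∀ᵐ z ∂μ, 0 < ptu z)
    (Ds Dtk Dtu : Z → ℝ)
    (hDs : Measurable Ds) (hDtk : Measurable Dtk) (hDtu : Measurable Dtu)
    (hDs0 : ∀ z, 0 < Ds z) (hDtk0 : ∀ z, 0 < Dtk z) (hDtu0 : ∀ z, 0 < Dtu z)
    (hD1 : ∀ z, Ds z + Dtk z + Dtu z = 1)
    (hint1 : Integrable (fun z => ps z * Real.log (Ds z)) μ)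
    (hint2 : Integrable (fun z => ptk z * Real.log (Dtk z)) μ)
    (hint3 : Integrable (fun z => ptu z * Real.log (Dtu z)) μ)
    (hint4 : Integrable (fun z => ps z * Real.log (ps z / (2 * pavg z))) μ)
    (hint5 : Integrable (fun z => ptk z * Real.log (ltk * ptk z / (2 * pavg z))) μ)
    (hint6 : Integrable (fun z => ptu z * Real.log (ltu * ptu z / (2 * pavg z))) μ) :
    -(∫ z, ps z * Real.log (Ds z) ∂μ)
        - ltk * ∫ z, ptk z * Real.log (Dtk z) ∂μ
        - ltu * ∫ z, ptu z * Real.log (Dtu z) ∂μ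
      ≥ -(∫ z, ps z * Real.log (ps z / (2 * pavg z)) ∂μ)
        - ltk * ∫ z, ptk z * Real.log (ltk * ptk z / (2 * pavg z)) ∂μ
        - ltu * ∫ z, ptu z * Real.log (ltu * ptu z / (2 * pavg z)) ∂μ := by
  set G : Z → ℝ := fun z =>
    (ps z * Real.log (ps z / (2 * pavg z)) - ps z * Real.log (Ds z))
    + ltk * (ptk z * Real.log (ltk * ptk z / (2 * pavg z)) - ptk z * Real.log (Dtk z))
    + ltu * (ptu z * Real.log (ltu * ptu z / (2 * pavg z)) - ptu z * Real.log (Dtu z))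
    with hG
  have hGint : Integrable G μ :=
    ((hint4.sub hint1).add ((hint5.sub hint2).const_mul ltk)).add
      ((hint6.sub hint3).const_mul ltu)
  have hGnonneg : 0 ≤ᵐ[μ] G := by
    filter_upwards [hpos_s, hpos_tk, hpos_tu] with z h1 h2 h3
    have hq : 0 < 2 * pavg z := by rw [hpavg z]; nlinarith
    have k1 : ps z - (2 * pavg z) * Ds z ≤
        ps z * (Real.log (ps z / (2 * pavg z)) - Real.log (Ds z)) :=
      key_log h1 hq (hDs0 z)
    have k2 : ltk * ptk z - (2 * pavg z) * Dtk z ≤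
        (ltk * ptk z) * (Real.log (ltk * ptk z / (2 * pavg z)) - Real.log (Dtk z)) :=
      key_log (by positivity) hq (hDtk0 z)
    have k3 : ltu * ptu z - (2 * pavg z) * Dtu z ≤
        (ltu * ptu z) * (Real.log (ltu * ptu z / (2 * pavg z)) - Real.log (Dtu z)) :=
      key_log (by positivity) hq (hDtu0 z)
    have hsum3 : ps z - (2 * pavg z) * Ds z + (ltk * ptk z - (2 * pavg z) * Dtk z)
        + (ltu * ptu z - (2 * pavg z) * Dtu z) = 0 := by
      rw [hpavg z]
      linear_combination (-(ps z + ltk * ptk z + ltu * ptu z)) * hD1 z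
    simp only [hG, Pi.zero_apply]
    nlinarith [k1, k2, k3]
  have hInt : 0 ≤ ∫ z, G z ∂μ := integral_nonneg_of_ae hGnonneg
  have hEq : ∫ z, G z ∂μ =
      ((∫ z, ps z * Real.log (ps z / (2 * pavg z)) ∂μ) - ∫ z, ps z * Real.log (Ds z) ∂μ)
      + ltk * ((∫ z, ptk z * Real.log (ltk * ptk z / (2 * pavg z)) ∂μ)
          - ∫ z, ptk z * Real.log (Dtk z) ∂μ)
      + ltu * ((∫ z, ptu z * Real.log (ltu * ptu z / (2 * pavg z)) ∂μ)
          - ∫ z, ptu z * Real.log (Dtu z) ∂μ) := by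
    have Ia : Integrable (fun z =>
        ps z * Real.log (ps z / (2 * pavg z)) - ps z * Real.log (Ds z)) μ :=
      hint4.sub hint1
    have Ib : Integrable (fun z =>
        ltk * (ptk z * Real.log (ltk * ptk z / (2 * pavg z)) - ptk z * Real.log (Dtk z))) μ :=
      (hint5.sub hint2).const_mul ltk
    have Ic : Integrable (fun z =>
        ltu * (ptu z * Real.log (ltu * ptu z / (2 * pavg z)) - ptu z * Real.log (Dtu z))) μ :=
      (hint6.sub hint3).const_mul ltu
    have e0 : ∫ z, ((ps z * Real.log (ps z / (2 * pavg z)) - ps z * Real.log (Ds z))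
          + ltk * (ptk z * Real.log (ltk * ptk z / (2 * pavg z)) - ptk z * Real.log (Dtk z))
          + ltu * (ptu z * Real.log (ltu * ptu z / (2 * pavg z)) - ptu z * Real.log (Dtu z))) ∂μ
        = (∫ z, ((ps z * Real.log (ps z / (2 * pavg z)) - ps z * Real.log (Ds z))
          + ltk * (ptk z * Real.log (ltk * ptk z / (2 * pavg z)) - ptk z * Real.log (Dtk z))) ∂μ)
          + ∫ z, ltu * (ptu z * Real.log (ltu * ptu z / (2 * pavg z)) - ptu z * Real.log (Dtu z)) ∂μ :=
      integral_add (Ia.add Ib) Ic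
    have e1 : ∫ z, ((ps z * Real.log (ps z / (2 * pavg z)) - ps z * Real.log (Ds z))
          + ltk * (ptk z * Real.log (ltk * ptk z / (2 * pavg z)) - ptk z * Real.log (Dtk z))) ∂μ
        = (∫ z, (ps z * Real.log (ps z / (2 * pavg z)) - ps z * Real.log (Ds z)) ∂μ)
          + ∫ z, ltk * (ptk z * Real.log (ltk * ptk z / (2 * pavg z)) - ptk z * Real.log (Dtk z)) ∂μ :=
      integral_add Ia Ib
    have s1 : ∫ z, (ps z * Real.log (ps z / (2 * pavg z)) - ps z * Real.log (Ds z)) ∂μ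
        = (∫ z, ps z * Real.log (ps z / (2 * pavg z)) ∂μ) - ∫ z, ps z * Real.log (Ds z) ∂μ :=
      integral_sub hint4 hint1
    have s2 : ∫ z, (ptk z * Real.log (ltk * ptk z / (2 * pavg z)) - ptk z * Real.log (Dtk z)) ∂μ
        = (∫ z, ptk z * Real.log (ltk * ptk z / (2 * pavg z)) ∂μ) - ∫ z, ptk z * Real.log (Dtk z) ∂μ :=
      integral_sub hint5 hint2
    have s3 : ∫ z, (ptu z * Real.log (ltu * ptu z / (2 * pavg z)) - ptu z * Real.log (Dtu z)) ∂μ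
        = (∫ z, ptu z * Real.log (ltu * ptu z / (2 * pavg z)) ∂μ) - ∫ z, ptu z * Real.log (Dtu z) ∂μ :=
      integral_sub hint6 hint3
    have m1 : ∫ z, ltk * (ptk z * Real.log (ltk * ptk z / (2 * pavg z)) - ptk z * Real.log (Dtk z)) ∂μ
        = ltk * ∫ z, (ptk z * Real.log (ltk * ptk z / (2 * pavg z)) - ptk z * Real.log (Dtk z)) ∂μ :=
      MeasureTheory.integral_const_mul _ _
    have m2 : ∫ z, ltu * (ptu z * Real.log (ltu * ptu z / (2 * pavg z)) - ptu z * Real.log (Dtu z)) ∂μ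
        = ltu * ∫ z, (ptu z * Real.log (ltu * ptu z / (2 * pavg z)) - ptu z * Real.log (Dtu z)) ∂μ :=
      MeasureTheory.integral_const_mul _ _
    simp only [hG]
    rw [e0, e1, s1, m1, m2, s2, s3]
  rw [hEq] at hInt
  linarith
end

section
/- Let μ be a σ-finite measure on a measurable space Z, let p_s, p_tk, p_tu : Z → [0,∞) be probability densities with respect to μ, and let λ_tk, λ_tu > 0 with λ_tk + λ_tu = 1. Define p_avg := (p_s + λ_tk·p_tk + λ_tu·p_tu)/2. Then KL(p_tu‖p_avg) := ∫ p_tu·log(p_tu/p_avg) dμ (convention 0·log 0 = 0) satisfies KL(p_tu‖p_avg) ≤ log 2 − log λ_tu. -/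
open MeasureTheory

/-- Proposition 1 of the paper: with
`p_avg = (p_s + λ_tk·p_tk + λ_tu·p_tu)/2`, the target-unknown KL divergence satisfies
`KL(p_tu‖p_avg) ≤ log 2 − log λ_tu`. -/
theorem stmt_5 {Z : Type*} [MeasurableSpace Z] (μ : Measure Z) [SigmaFinite μ]
    (ps ptk ptu : Z → ℝ) (ltk ltu : ℝ)
    (hps : Measurable ps) (hps0 : ∀ z, 0 ≤ ps z) (hps1 : ∫ z, ps z ∂μ = 1)
    (hptk : Measurable ptk) (hptk0 : ∀ z, 0 ≤ ptk z) (hptk1 : ∫ z, ptk z ∂μ = 1)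
    (hptu : Measurable ptu) (hptu0 : ∀ z, 0 ≤ ptu z) (hptu1 : ∫ z, ptu z ∂μ = 1)
    (hltk : 0 < ltk) (hltu : 0 < ltu) (hsum : ltk + ltu = 1)
    (pavg : Z → ℝ) (hpavg : ∀ z, pavg z = (ps z + ltk * ptk z + ltu * ptu z) / 2) :
    ∫ z, ptu z * Real.log (ptu z / pavg z) ∂μ ≤ Real.log 2 - Real.log ltu := by
  have hltu1 : ltu ≤ 1 := by linarith
  have hlog_ltu : Real.log ltu ≤ 0 := Real.log_nonpos (le_of_lt hltu) hltu1
  have hbound : (0:ℝ) ≤ Real.log 2 - Real.log ltu := by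
    have : (0:ℝ) ≤ Real.log 2 := Real.log_nonneg (by norm_num)
    linarith
  have hpt : ∀ z, ptu z * Real.log (ptu z / pavg z) ≤ ptu z * (Real.log 2 - Real.log ltu) := by
    intro z
    rcases eq_or_lt_of_le (hptu0 z) with h0 | hpos
    · simp [← h0]
    · have hpavg_pos : 0 < pavg z := by
        rw [hpavg z]
        have h1 := hps0 z
        have h2 := hptk0 z
        have := mul_pos hltu hpos
        have := mul_nonneg (le_of_lt hltk) (hptk0 z)
        linarith
      have hratio : ptu z / pavg z ≤ 2 / ltu := by
        rw [div_le_div_iff₀ hpavg_pos hltu]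
        rw [hpavg z]
        have h1 := hps0 z
        have := mul_nonneg (le_of_lt hltk) (hptk0 z)
        nlinarith
      have hlog : Real.log (ptu z / pavg z) ≤ Real.log 2 - Real.log ltu := by
        calc Real.log (ptu z / pavg z) ≤ Real.log (2 / ltu) :=
              Real.log_le_log (div_pos hpos hpavg_pos) hratio
          _ = Real.log 2 - Real.log ltu := Real.log_div (by norm_num) (ne_of_gt hltu)
      exact mul_le_mul_of_nonneg_left hlog (le_of_lt hpos)
  by_cases hint : Integrable (fun z => ptu z * Real.log (ptu z / pavg z)) μ
  · have hptu_int : Integrable ptu μ := by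
      by_contra h
      rw [integral_undef h] at hptu1
      norm_num at hptu1
    have hg : Integrable (fun z => ptu z * (Real.log 2 - Real.log ltu)) μ :=
      hptu_int.mul_const _
    calc ∫ z, ptu z * Real.log (ptu z / pavg z) ∂μ
        ≤ ∫ z, ptu z * (Real.log 2 - Real.log ltu) ∂μ := integral_mono hint hg hpt
      _ = (∫ z, ptu z ∂μ) * (Real.log 2 - Real.log ltu) := integral_mul_const _ _
      _ = Real.log 2 - Real.log ltu := by rw [hptu1, one_mul]
  · rw [integral_undef hint]
    exact hbound
end

section
/- Let μ be a σ-finite measure on a measurable space Z, let p_s, p_tk, p_tu be probability densities with respect to μ, and let λ_tk, λ_tu > 0 with λ_tk + λ_tu = 1. Define p_avg := (p_s + λ_tk·p_tk + λ_tu·p_tu)/2. Assume p_s·p_tu = 0 and p_tk·p_tu = 0 μ-almost everywhere (disjoint supports). Then KL(p_tu‖p_avg) := ∫ p_tu·log(p_tu/p_avg) dμ = log(2/λ_tu). -/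
open MeasureTheory

/-- Under disjoint supports (`p_s·p_tu = 0` and `p_tk·p_tu = 0` a.e.),
the target-unknown KL term is exactly `log(2/λ_tu)`. -/
theorem stmt_7 {Z : Type*} [MeasurableSpace Z] (μ : Measure Z) [SigmaFinite μ]
    (ps ptk ptu : Z → ℝ) (ltk ltu : ℝ)
    (hps : Measurable ps) (hps0 : ∀ z, 0 ≤ ps z) (hps1 : ∫ z, ps z ∂μ = 1)
    (hptk : Measurable ptk) (hptk0 : ∀ z, 0 ≤ ptk z) (hptk1 : ∫ z, ptk z ∂μ = 1)
    (hptu : Measurable ptu) (hptu0 : ∀ z, 0 ≤ ptu z) (hptu1 : ∫ z, ptu z ∂μ = 1)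
    (hltk : 0 < ltk) (hltu : 0 < ltu) (hsum : ltk + ltu = 1)
    (pavg : Z → ℝ) (hpavg : ∀ z, pavg z = (ps z + ltk * ptk z + ltu * ptu z) / 2)
    (hdisj_s : ∀ᵐ z ∂μ, ps z * ptu z = 0)
    (hdisj_tk : ∀ᵐ z ∂μ, ptk z * ptu z = 0) :
    ∫ z, ptu z * Real.log (ptu z / pavg z) ∂μ = Real.log (2 / ltu) := by
  have hae : ∀ᵐ z ∂μ, ptu z * Real.log (ptu z / pavg z)
      = ptu z * Real.log (2 / ltu) := by
    filter_upwards [hdisj_s, hdisj_tk] with z h1 h2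
    rcases eq_or_ne (ptu z) 0 with h | h
    · simp [h]
    · have hs : ps z = 0 := by
        rcases mul_eq_zero.1 h1 with h' | h' <;> [exact h'; exact absurd h' h]
      have htk : ptk z = 0 := by
        rcases mul_eq_zero.1 h2 with h' | h' <;> [exact h'; exact absurd h' h]
      have : ptu z / pavg z = 2 / ltu := by
        rw [hpavg z, hs, htk]
        field_simp
        ring
      rw [this]
  rw [integral_congr_ae hae, integral_mul_const, hptu1, one_mul]
end

section
/- Let μ be a σ-finite measure on a measurable space Z, let p_s, p_tk, p_tu be probability densities with respect to μ, and let λ_tk, λ_tu > 0 with λ_tk + λ_tu = 1. Define p_avg := (p_s + λ_tk·p_tk + λ_tu·p_tu)/2 and α := λ_tk/(1 + λ_tk). Assume p_s·p_tu = 0 and p_tk·p_tu = 0 μ-almost everywhere, and that all integrals below are well defined and finite. Then KL(p_s‖p_avg) + λ_tk·KL(p_tk‖p_avg) − λ_tu·KL(p_tu‖p_avg) = ∫ p_s·log(p_s/((1−α)·p_s + α·p_tk)) dμ + λ_tk·∫ p_tk·log(p_tk/(α·p_tk + (1−α)·p_s)) dμ + C₃, where C₃ = (1 + λ_tk)·log(2/(1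 + λ_tk)) − λ_tu·log(2/λ_tu). -/
open MeasureTheory

/-- Under disjoint supports, the generator objective equals, up to the
constant `C₃ = (1+λ_tk)·log(2/(1+λ_tk)) − λ_tu·log(2/λ_tu)`, the sum of the skewed
`α`-KL divergence `D^{(α)}(p_s‖p_tk)` and `λ_tk` times `D^{(1−α)}(p_tk‖p_s)`, where
`α = λ_tk/(1+λ_tk)`. -/
theorem stmt_9 {Z : Type*} [MeasurableSpace Z] (μ : Measure Z) [SigmaFinite μ]
    (ps ptk ptu : Z → ℝ) (ltk ltu : ℝ)
    (hps : Measurable ps) (hps0 : ∀ z, 0 ≤ ps z) (hps1 : ∫ z, ps z ∂μ = 1)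
    (hptk : Measurable ptk) (hptk0 : ∀ z, 0 ≤ ptk z) (hptk1 : ∫ z, ptk z ∂μ = 1)
    (hptu : Measurable ptu) (hptu0 : ∀ z, 0 ≤ ptu z) (hptu1 : ∫ z, ptu z ∂μ = 1)
    (hltk : 0 < ltk) (hltu : 0 < ltu) (hsum : ltk + ltu = 1)
    (pavg : Z → ℝ) (hpavg : ∀ z, pavg z = (ps z + ltk * ptk z + ltu * ptu z) / 2)
    (α : ℝ) (hα : α = ltk / (1 + ltk))
    (hdisj_s : ∀ᵐ z ∂μ, ps z * ptu z = 0)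
    (hdisj_tk : ∀ᵐ z ∂μ, ptk z * ptu z = 0)
    (hint1 : Integrable (fun z => ps z * Real.log (ps z / pavg z)) μ)
    (hint2 : Integrable (fun z => ptk z * Real.log (ptk z / pavg z)) μ)
    (hint3 : Integrable (fun z => ptu z * Real.log (ptu z / pavg z)) μ)
    (hint4 : Integrable (fun z => ps z * Real.log (ps z / ((1 - α) * ps z + α * ptk z))) μ)
    (hint5 : Integrable (fun z => ptk z * Real.log (ptk z / (α * ptk z + (1 - α) * ps z))) μ) :
    (∫ z, ps z * Real.log (ps z / pavg z) ∂μ)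
        + ltk * (∫ z, ptk z * Real.log (ptk z / pavg z) ∂μ)
        - ltu * (∫ z, ptu z * Real.log (ptu z / pavg z) ∂μ)
      = (∫ z, ps z * Real.log (ps z / ((1 - α) * ps z + α * ptk z)) ∂μ)
        + ltk * (∫ z, ptk z * Real.log (ptk z / (α * ptk z + (1 - α) * ps z)) ∂μ)
        + ((1 + ltk) * Real.log (2 / (1 + ltk)) - ltu * Real.log (2 / ltu)) := by
  have h1ltk : (0:ℝ) < 1 + ltk := by linarith
  have hαpos : 0 < 1 - α := by
    rw [hα]; rw [sub_pos, div_lt_one h1ltk]; linarith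
  have hα0 : 0 ≤ α := by rw [hα]; positivity
  have hps_int : Integrable ps μ := by
    by_contra h; rw [integral_undef h] at hps1; norm_num at hps1
  have hptk_int : Integrable ptk μ := by
    by_contra h; rw [integral_undef h] at hptk1; norm_num at hptk1
  have hptu_int : Integrable ptu μ := by
    by_contra h; rw [integral_undef h] at hptu1; norm_num at hptu1
  -- key pointwise identities
  have heq1 : ∀ᵐ z ∂μ, ps z * Real.log (ps z / pavg z)
      = ps z * Real.log (ps z / ((1 - α) * ps z + α * ptk z))
        + ps z * Real.log (2 / (1 + ltk)) := by
    filter_upwards [hdisj_s] with z hz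
    rcases eq_or_lt_of_le (hps0 z) with h | h
    · simp [← h]
    · have htu : ptu z = 0 := by
        rcases mul_eq_zero.mp hz with h' | h'
        · exact absurd h' (ne_of_gt h)
        · exact h'
      have hD : 0 < (1 - α) * ps z + α * ptk z := by
        have := hptk0 z; nlinarith
      have hpavgz : pavg z = (1 + ltk) / 2 * ((1 - α) * ps z + α * ptk z) := by
        rw [hpavg, htu, hα]; field_simp; ring
      have : ps z / pavg z = ps z / ((1 - α) * ps z + α * ptk z) * (2 / (1 + ltk)) := by
        rw [hpavgz]; field_simp
      rw [this, Real.log_mul (by positivity) (by positivity), mul_add]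
  have heq2 : ∀ᵐ z ∂μ, ptk z * Real.log (ptk z / pavg z)
      = ptk z * Real.log (ptk z / (α * ptk z + (1 - α) * ps z))
        + ptk z * Real.log (2 / (1 + ltk)) := by
    filter_upwards [hdisj_tk] with z hz
    rcases eq_or_lt_of_le (hptk0 z) with h | h
    · simp [← h]
    · have htu : ptu z = 0 := by
        rcases mul_eq_zero.mp hz with h' | h'
        · exact absurd h' (ne_of_gt h)
        · exact h'
      have hD : 0 < α * ptk z + (1 - α) * ps z := by
        have := hps0 z
        have hα' : 0 < α := by rw [hα]; positivity
        nlinarith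
      have hpavgz : pavg z = (1 + ltk) / 2 * (α * ptk z + (1 - α) * ps z) := by
        rw [hpavg, htu, hα]; field_simp; ring
      have : ptk z / pavg z = ptk z / (α * ptk z + (1 - α) * ps z) * (2 / (1 + ltk)) := by
        rw [hpavgz]; field_simp
      rw [this, Real.log_mul (by positivity) (by positivity), mul_add]
  have heq3 : ∀ᵐ z ∂μ, ptu z * Real.log (ptu z / pavg z)
      = ptu z * Real.log (2 / ltu) := by
    filter_upwards [hdisj_s, hdisj_tk] with z hz1 hz2
    rcases eq_or_lt_of_le (hptu0 z) with h | h
    · simp [← h]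
    · have hs : ps z = 0 := by
        rcases mul_eq_zero.mp hz1 with h' | h'
        · exact h'
        · exact absurd h' (ne_of_gt h)
      have htk : ptk z = 0 := by
        rcases mul_eq_zero.mp hz2 with h' | h'
        · exact h'
        · exact absurd h' (ne_of_gt h)
      have hpavgz : pavg z = ltu * ptu z / 2 := by
        rw [hpavg, hs, htk]; ring
      have : ptu z / pavg z = 2 / ltu := by
        rw [hpavgz]; field_simp
      rw [this]
  -- integrate the pointwise identities
  have hI1 : (∫ z, ps z * Real.log (ps z / pavg z) ∂μ)
      = (∫ z, ps z * Real.log (ps z / ((1 - α) * ps z + α * ptk z)) ∂μ)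
        + Real.log (2 / (1 + ltk)) := by
    rw [integral_congr_ae heq1, integral_add hint4 (hps_int.mul_const _),
      integral_mul_const, hps1, one_mul]
  have hI2 : (∫ z, ptk z * Real.log (ptk z / pavg z) ∂μ)
      = (∫ z, ptk z * Real.log (ptk z / (α * ptk z + (1 - α) * ps z)) ∂μ)
        + Real.log (2 / (1 + ltk)) := by
    rw [integral_congr_ae heq2, integral_add hint5 (hptk_int.mul_const _),
      integral_mul_const, hptk1, one_mul]
  have hI3 : (∫ z, ptu z * Real.log (ptu z / pavg z) ∂μ) = Real.log (2 / ltu) := by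
    rw [integral_congr_ae heq3, integral_mul_const, hptu1, one_mul]
  rw [hI1, hI2, hI3]; ring
end

section
/- Let μ be a σ-finite measure on a measurable space Z, let p_s, p_tk, p_tu be probability densities with respect to μ, and let λ_tk, λ_tu > 0 with λ_tk + λ_tu = 1. Define p_avg := (p_s + λ_tk·p_tk + λ_tu·p_tu)/2. Assume p_s·p_tu = 0 and p_tk·p_tu = 0 μ-almost everywhere, and that all KL terms below are well defined and finite. Then KL(p_s‖p_avg) + λ_tk·KL(p_tk‖p_avg) − λ_tu·KL(p_tu‖p_avg) ≥ (1 + λ_tk)·log(2/(1 + λ_tk)) − λ_tu·log(2/λ_tu), with equality if and only if p_s = p_tk μ-almost everywhere. -/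
open MeasureTheory

lemma aux_log_lb {t : ℝ} (ht : 0 < t) : 1 - t⁻¹ ≤ Real.log t := by
  have h := Real.add_one_le_exp (-Real.log t)
  rw [Real.exp_neg, Real.exp_log ht] at h
  linarith

lemma aux_log_lb_strict {t : ℝ} (ht : 0 < t) (ht1 : t ≠ 1) : 1 - t⁻¹ < Real.log t := by
  have hlt : Real.log t ≠ 0 := by
    intro h
    rcases Real.log_eq_zero.mp h with h | h | h <;> [linarith; exact ht1 h; linarith]
  have h := Real.add_one_lt_exp (neg_ne_zero.mpr hlt)
  rw [Real.exp_neg, Real.exp_log ht] at h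
  linarith

lemma aux_klpt {a b : ℝ} (ha : 0 ≤ a) (hb : 0 ≤ b) (hab : 0 < a → 0 < b) :
    a - b ≤ a * Real.log (a / b) ∧ (a * Real.log (a / b) = a - b ↔ a = b) := by
  rcases eq_or_lt_of_le ha with h | h
  · simp [← h]
    constructor
    · linarith
    · constructor
      · intro h'; linarith
      · intro h'; linarith
  · have hbpos := hab h
    have ht : 0 < a / b := div_pos h hbpos
    have hinv : (a / b)⁻¹ = b / a := by field_simp
    constructor
    · have := aux_log_lb ht
      rw [hinv] at this
      have := mul_le_mul_of_nonneg_left this (le_of_lt h)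
      calc a - b = a * (1 - b / a) := by field_simp
        _ ≤ a * Real.log (a / b) := this
    · constructor
      · intro heq
        by_contra hne
        have ht1 : a / b ≠ 1 := by
          intro h1; exact hne (by field_simp at h1; linarith)
        have := aux_log_lb_strict ht ht1
        rw [hinv] at this
        have := mul_lt_mul_of_pos_left this h
        have h2 : a * (1 - b / a) = a - b := by field_simp
        rw [h2] at this
        linarith
      · intro heq
        subst heq
        rw [div_self (ne_of_gt h), Real.log_one]
        ring

/-- Proposition 2 of the paper, conclusion: under disjoint supports,
`KL(p_s‖p_avg) + λ_tk·KL(p_tk‖p_avg) − λ_tu·KL(p_tu‖p_avg)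
  ≥ (1+λ_tk)·log(2/(1+λ_tk)) − λ_tu·log(2/λ_tu)`,
with equality iff `p_s = p_tk` μ-a.e. -/
theorem stmt_10 {Z : Type*} [MeasurableSpace Z] (μ : Measure Z) [SigmaFinite μ]
    (ps ptk ptu : Z → ℝ) (ltk ltu : ℝ)
    (hps : Measurable ps) (hps0 : ∀ z, 0 ≤ ps z) (hps1 : ∫ z, ps z ∂μ = 1)
    (hptk : Measurable ptk) (hptk0 : ∀ z, 0 ≤ ptk z) (hptk1 : ∫ z, ptk z ∂μ = 1)
    (hptu : Measurable ptu) (hptu0 : ∀ z, 0 ≤ ptu z) (hptu1 : ∫ z, ptu z ∂μ = 1)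
    (hltk : 0 < ltk) (hltu : 0 < ltu) (hsum : ltk + ltu = 1)
    (pavg : Z → ℝ) (hpavg : ∀ z, pavg z = (ps z + ltk * ptk z + ltu * ptu z) / 2)
    (hdisj_s : ∀ᵐ z ∂μ, ps z * ptu z = 0)
    (hdisj_tk : ∀ᵐ z ∂μ, ptk z * ptu z = 0)
    (hint1 : Integrable (fun z => ps z * Real.log (ps z / pavg z)) μ)
    (hint2 : Integrable (fun z => ptk z * Real.log (ptk z / pavg z)) μ)
    (hint3 : Integrable (fun z => ptu z * Real.log (ptu z / pavg z)) μ) :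
    ((∫ z, ps z * Real.log (ps z / pavg z) ∂μ)
        + ltk * (∫ z, ptk z * Real.log (ptk z / pavg z) ∂μ)
        - ltu * (∫ z, ptu z * Real.log (ptu z / pavg z) ∂μ)
      ≥ (1 + ltk) * Real.log (2 / (1 + ltk)) - ltu * Real.log (2 / ltu))
    ∧ ((∫ z, ps z * Real.log (ps z / pavg z) ∂μ)
        + ltk * (∫ z, ptk z * Real.log (ptk z / pavg z) ∂μ)
        - ltu * (∫ z, ptu z * Real.log (ptu z / pavg z) ∂μ)
          = (1 + ltk) * Real.log (2 / (1 + ltk)) - ltu * Real.log (2 / ltu)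
        ↔ ps =ᵐ[μ] ptk) := by
  have h1k : (0:ℝ) < 1 + ltk := by linarith
  have h1k' : (1:ℝ) + ltk ≠ 0 := ne_of_gt h1k
  -- integrability of the densities
  have ips : Integrable ps μ := by
    by_contra h; rw [integral_undef h] at hps1; norm_num at hps1
  have iptk : Integrable ptk μ := by
    by_contra h; rw [integral_undef h] at hptk1; norm_num at hptk1
  have iptu : Integrable ptu μ := by
    by_contra h; rw [integral_undef h] at hptu1; norm_num at hptu1
  -- q : normalized mixture of ps and ptk
  set q : Z → ℝ := fun z => (ps z + ltk * ptk z) / (1 + ltk) with hq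
  have hq0 : ∀ z, 0 ≤ q z := fun z =>
    div_nonneg (by nlinarith [hps0 z, hptk0 z]) (le_of_lt h1k)
  have hqpos_s : ∀ z, 0 < ps z → 0 < q z := fun z hz =>
    div_pos (by nlinarith [hptk0 z]) h1k
  have hqpos_tk : ∀ z, 0 < ptk z → 0 < q z := fun z hz =>
    div_pos (by nlinarith [hps0 z]) h1k
  have iq : Integrable q μ := (ips.add (iptk.const_mul ltk)).div_const (1 + ltk)
  have hq1 : ∫ z, q z ∂μ = 1 := by
    simp only [hq]
    rw [integral_div, integral_add ips (iptk.const_mul ltk), integral_const_mul,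
      hps1, hptk1]
    field_simp
  set c : ℝ := Real.log (2 / (1 + ltk)) with hc
  -- a.e. rewriting of the three integrands
  have h3 : ∀ᵐ z ∂μ, ptu z * Real.log (ptu z / pavg z)
      = Real.log (2 / ltu) * ptu z := by
    filter_upwards [hdisj_s, hdisj_tk] with z hzs hztk
    rcases eq_or_lt_of_le (hptu0 z) with h | h
    · simp [← h]
    · have hpsz : ps z = 0 := by
        rcases mul_eq_zero.mp hzs with h' | h'
        · exact h'
        · exact absurd h' (ne_of_gt h)
      have hptkz : ptk z = 0 := by
        rcases mul_eq_zero.mp hztk with h' | h'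
        · exact h'
        · exact absurd h' (ne_of_gt h)
      have : ptu z / pavg z = 2 / ltu := by
        rw [hpavg z, hpsz, hptkz]
        field_simp
        ring
      rw [this]; ring
  have h1 : ∀ᵐ z ∂μ, ps z * Real.log (ps z / pavg z)
      = ps z * Real.log (ps z / q z) + c * ps z := by
    filter_upwards [hdisj_s] with z hzs
    rcases eq_or_lt_of_le (hps0 z) with h | h
    · simp [← h]
    · have hptuz : ptu z = 0 := by
        rcases mul_eq_zero.mp hzs with h' | h'
        · exact absurd h' (ne_of_gt h)
        · exact h'
      have hqz : 0 < q z := hqpos_s z h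
      have hs : 0 < ps z + ltk * ptk z := by nlinarith [hptk0 z]
      have key : ps z / pavg z = (ps z / q z) * (2 / (1 + ltk)) := by
        rw [hpavg z, hptuz, hq]
        simp only
        rw [mul_zero, add_zero]
        rw [div_div_eq_mul_div, div_div_eq_mul_div, div_mul_div_comm]
        rw [div_eq_div_iff (by positivity) (by positivity)]
        ring
      rw [key, Real.log_mul (ne_of_gt (div_pos h hqz)) (ne_of_gt (div_pos two_pos h1k))]
      ring
  have h2 : ∀ᵐ z ∂μ, ptk z * Real.log (ptk z / pavg z)
      = ptk z * Real.log (ptk z / q z) + c * ptk z := by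
    filter_upwards [hdisj_tk] with z hztk
    rcases eq_or_lt_of_le (hptk0 z) with h | h
    · simp [← h]
    · have hptuz : ptu z = 0 := by
        rcases mul_eq_zero.mp hztk with h' | h'
        · exact absurd h' (ne_of_gt h)
        · exact h'
      have hqz : 0 < q z := hqpos_tk z h
      have hs : 0 < ps z + ltk * ptk z := by nlinarith [hps0 z]
      have key : ptk z / pavg z = (ptk z / q z) * (2 / (1 + ltk)) := by
        rw [hpavg z, hptuz, hq]
        simp only
        rw [mul_zero, add_zero]
        rw [div_div_eq_mul_div, div_div_eq_mul_div, div_mul_div_comm]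
        rw [div_eq_div_iff (by positivity) (by positivity)]
        ring
      rw [key, Real.log_mul (ne_of_gt (div_pos h hqz)) (ne_of_gt (div_pos two_pos h1k))]
      ring
  -- integrability of the q-relative integrands
  have iA : Integrable (fun z => ps z * Real.log (ps z / q z)) μ := by
    refine (hint1.sub (ips.const_mul c)).congr ?_
    filter_upwards [h1] with z hz
    simp only [Pi.sub_apply]
    rw [hz]; ring
  have iB : Integrable (fun z => ptk z * Real.log (ptk z / q z)) μ := by
    refine (hint2.sub (iptk.const_mul c)).congr ?_
    filter_upwards [h2] with z hz
    simp only [Pi.sub_apply]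
    rw [hz]; ring
  set A : ℝ := ∫ z, ps z * Real.log (ps z / q z) ∂μ with hA
  set B : ℝ := ∫ z, ptk z * Real.log (ptk z / q z) ∂μ with hB
  -- integral computations
  have iF : ∫ z, ps z * Real.log (ps z / pavg z) ∂μ = A + c := by
    rw [integral_congr_ae h1, integral_add iA (ips.const_mul c),
      integral_const_mul, hps1, mul_one]
  have iG : ∫ z, ptk z * Real.log (ptk z / pavg z) ∂μ = B + c := by
    rw [integral_congr_ae h2, integral_add iB (iptk.const_mul c),
      integral_const_mul, hptk1, mul_one]
  have iH : ∫ z, ptu z * Real.log (ptu z / pavg z) ∂μ = Real.log (2 / ltu) := by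
    rw [integral_congr_ae h3, integral_const_mul, hptu1, mul_one]
  -- nonnegativity of corrected integrands
  have hD1 : ∀ z, 0 ≤ ps z * Real.log (ps z / q z) - (ps z - q z) := fun z => by
    have := (aux_klpt (hps0 z) (hq0 z) (hqpos_s z)).1
    linarith
  have hD2 : ∀ z, 0 ≤ ptk z * Real.log (ptk z / q z) - (ptk z - q z) := fun z => by
    have := (aux_klpt (hptk0 z) (hq0 z) (hqpos_tk z)).1
    linarith
  have ipsq : Integrable (fun z => ps z - q z) μ := ips.sub iq
  have iptkq : Integrable (fun z => ptk z - q z) μ := iptk.sub iq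
  have ipsq1 : ∫ z, (ps z - q z) ∂μ = 0 := by
    rw [integral_sub ips iq, hps1, hq1]; ring
  have iptkq1 : ∫ z, (ptk z - q z) ∂μ = 0 := by
    rw [integral_sub iptk iq, hptk1, hq1]; ring
  have iD1 : Integrable (fun z => ps z * Real.log (ps z / q z) - (ps z - q z)) μ :=
    iA.sub ipsq
  have iD2 : Integrable (fun z => ptk z * Real.log (ptk z / q z) - (ptk z - q z)) μ :=
    iB.sub iptkq
  have intD1 : ∫ z, (ps z * Real.log (ps z / q z) - (ps z - q z)) ∂μ = A := by
    rw [integral_sub iA ipsq, ipsq1, ← hA]; ring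
  have intD2 : ∫ z, (ptk z * Real.log (ptk z / q z) - (ptk z - q z)) ∂μ = B := by
    rw [integral_sub iB iptkq, iptkq1, ← hB]; ring
  have hA0 : 0 ≤ A := by
    rw [← intD1]; exact integral_nonneg fun z => hD1 z
  have hB0 : 0 ≤ B := by
    rw [← intD2]; exact integral_nonneg fun z => hD2 z
  have hltkB : 0 ≤ ltk * B := mul_nonneg hltk.le hB0
  rw [iF, iG, iH]
  constructor
  · have : 0 ≤ A + ltk * B := by linarith
    linarith
  · constructor
    · intro heq
      have hAB : A + ltk * B = 0 := by linear_combination heq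
      have hA0' : A = 0 := by linarith
      have := (integral_eq_zero_iff_of_nonneg (fun z => hD1 z) iD1).mp (by rw [intD1, hA0'])
      filter_upwards [this] with z hz
      have hz' : ps z * Real.log (ps z / q z) = ps z - q z := by
        have : ps z * Real.log (ps z / q z) - (ps z - q z) = 0 := hz
        linarith
      have hpq : ps z = q z := (aux_klpt (hps0 z) (hq0 z) (hqpos_s z)).2.mp hz'
      have hpq' : ps z = (ps z + ltk * ptk z) / (1 + ltk) := hpq
      rw [eq_div_iff h1k'] at hpq'
      have hfin : ltk * ps z = ltk * ptk z := by linear_combination hpq'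
      exact mul_left_cancel₀ (ne_of_gt hltk) hfin
    · intro heq
      have hqeq : ∀ᵐ z ∂μ, q z = ps z := by
        filter_upwards [heq] with z hz
        simp only [hq]
        rw [← hz]
        rw [div_eq_iff h1k']
        ring
      have hA' : A = 0 := by
        have hzero : (fun z => ps z * Real.log (ps z / q z)) =ᵐ[μ] fun _ => (0:ℝ) := by
          filter_upwards [hqeq] with z hz
          rcases eq_or_lt_of_le (hps0 z) with h | h
          · simp [← h]
          · rw [hz, div_self (ne_of_gt h), Real.log_one, mul_zero]
        rw [hA, integral_congr_ae hzero, integral_zero]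
      have hB' : B = 0 := by
        have hzero : (fun z => ptk z * Real.log (ptk z / q z)) =ᵐ[μ] fun _ => (0:ℝ) := by
          filter_upwards [hqeq, heq] with z hz hz2
          rcases eq_or_lt_of_le (hptk0 z) with h | h
          · simp [← h]
          · rw [hz, hz2, div_self (ne_of_gt h), Real.log_one, mul_zero]
        rw [hB, integral_congr_ae hzero, integral_zero]
      rw [hA', hB']
      ring
end
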